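/- If |Θ| ≥ 3 and m is a fixed point of the negation transformation (m̄ = m), then m is the vacuous belief structure. -/

import Mathlib

/-!
Negation sends every set with at least two points to `Θ` and the singleton `{θ}` to `Θ ∖ {θ}`.
So a fixed point satisfies `m Θ = ∑_{|A| ≥ 2} m A`, which by nonnegativity kills every
non-singleton proper subset; and `m {θ} = m̄ (Θ ∖ {θ}) = m (Θ ∖ {θ}) = 0` because `Θ ∖ {θ}` has at
least two points once `|Θ| ≥ 3`.
-/

open Finset

variable {α : Type*} [Fintype α] [DecidableEq α]

/-- Set-negation: neg(A) = ⋃_{θ∈A} (Θ∖{θ}). -/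
def negSet (A : Finset α) : Finset α := A.biUnion (fun θ => Finset.univ \ {θ})

/-- Negation of a belief structure: m̄(B) = ∑_{A nonempty, neg(A)=B} m(A). -/
noncomputable def negBS (m : Finset α → ℝ) (B : Finset α) : ℝ :=
  ∑ A ∈ Finset.univ.filter (fun A : Finset α => A.Nonempty ∧ negSet A = B), m A

theorem negSet_singleton (θ : α) : negSet {θ} = univ.erase θ := by
  simp [negSet, sdiff_singleton_eq_erase]

theorem negSet_of_nontrivial {A : Finset α} (hA : A.Nontrivial) : negSet A = univ := by
  obtain ⟨a, ha, b, hb, hab⟩ := hA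
  refine eq_univ_of_forall fun x => mem_biUnion.mpr ?_
  rcases eq_or_ne x a with rfl | hxa
  · exact ⟨b, hb, by simpa using hab⟩
  · exact ⟨a, ha, by simpa using hxa⟩

theorem negSet_eq_univ_iff {A : Finset α} (hA : A.Nonempty) :
    negSet A = univ ↔ A.Nontrivial := by
  refine ⟨fun h => ?_, negSet_of_nontrivial⟩
  obtain ⟨θ, rfl⟩ | hA := hA.exists_eq_singleton_or_nontrivial
  · rw [negSet_singleton, erase_eq_self] at h
    exact absurd (mem_univ θ) h
  · exact hA

theorem negSet_eq_erase_iff {A : Finset α} (hA : A.Nonempty) (θ : α) :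
    negSet A = univ.erase θ ↔ A = {θ} := by
  refine ⟨fun h => ?_, fun h => h ▸ negSet_singleton θ⟩
  obtain ⟨θ', rfl⟩ | hA := hA.exists_eq_singleton_or_nontrivial
  · rw [negSet_singleton] at h
    rw [(erase_inj univ (mem_univ θ')).mp h]
  · rw [negSet_of_nontrivial hA, eq_comm, erase_eq_self] at h
    exact absurd (mem_univ θ) h

theorem negBS_univ (m : Finset α → ℝ) :
    negBS m univ = ∑ A ∈ univ.filter Finset.Nontrivial, m A := by
  refine sum_congr (filter_congr fun A _ => ?_) fun _ _ => rfl
  exact ⟨fun ⟨hA, h⟩ => (negSet_eq_univ_iff hA).mp h,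
    fun hA => ⟨hA.nonempty, negSet_of_nontrivial hA⟩⟩

theorem negBS_erase (m : Finset α → ℝ) (θ : α) : negBS m (univ.erase θ) = m {θ} := by
  have hpre : univ.filter (fun A : Finset α => A.Nonempty ∧ negSet A = univ.erase θ) = {{θ}} := by
    ext A
    simp only [mem_filter, mem_univ, true_and, mem_singleton]
    exact ⟨fun ⟨hA, h⟩ => (negSet_eq_erase_iff hA θ).mp h,
      fun h => h ▸ ⟨singleton_nonempty θ, negSet_singleton θ⟩⟩
  rw [negBS, hpre, sum_singleton]

theorem eq_zero_of_nontrivial_of_negBS_univ {m : Finset α → ℝ} (hnonneg : ∀ A, 0 ≤ m A)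
    (hfix : negBS m univ = m univ) {A : Finset α} (hA : A.Nontrivial) (hne : A ≠ univ) :
    m A = 0 := by
  have huniv : univ ∈ univ.filter Finset.Nontrivial :=
    mem_filter.mpr ⟨mem_univ _, hA.mono (subset_univ A)⟩
  have hrest : ∑ B ∈ (univ.filter Finset.Nontrivial).erase univ, m B = 0 := by
    have := sum_erase_add _ m huniv
    rw [← negBS_univ, hfix] at this
    linarith
  exact (sum_eq_zero_iff_of_nonneg fun B _ => hnonneg B).mp hrest A
    (mem_erase.mpr ⟨hne, mem_filter.mpr ⟨mem_univ A, hA⟩⟩)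

theorem univ_erase_nontrivial (hcard : 3 ≤ Fintype.card α) (θ : α) :
    (univ.erase θ).Nontrivial := by
  rw [← one_lt_card_iff_nontrivial, card_erase_of_mem (mem_univ θ), card_univ]
  omega

theorem fixed_point_is_vacuous (m : Finset α → ℝ)
    (hcard : 3 ≤ Fintype.card α)
    (hempty : m ∅ = 0) (hnonneg : ∀ A, 0 ≤ m A ∧ m A ≤ 1)
    (hsum : ∑ A : Finset α, m A = 1)
    (hfix : negBS m = m) :
    m Finset.univ = 1 ∧ ∀ B : Finset α, B ≠ Finset.univ → m B = 0 := by
  have hnontrivial : ∀ A : Finset α, A.Nontrivial → A ≠ univ → m A = 0 :=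
    fun A => eq_zero_of_nontrivial_of_negBS_univ (fun B => (hnonneg B).1) (congrFun hfix univ)
  have hsingleton (θ : α) : m {θ} = 0 := by
    rw [← negBS_erase m θ, congrFun hfix]
    exact hnontrivial _ (univ_erase_nontrivial hcard θ) (by simp [erase_eq_self])
  have hproper (B : Finset α) (hB : B ≠ univ) : m B = 0 := by
    obtain rfl | hne := B.eq_empty_or_nonempty
    · exact hempty
    obtain ⟨θ, rfl⟩ | hB' := hne.exists_eq_singleton_or_nontrivial
    · exact hsingleton θ
    · exact hnontrivial B hB' hB
  refine ⟨?_, hproper⟩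
  rw [← hsum, sum_eq_single_of_mem univ (mem_univ _) fun B _ hB => hproper B hB]
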